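/- arXiv:1004.2995 — 2 statements merged into one kernel-verified Lean document; each statement's English description precedes it below -/
import Mathlib

section
/- Let X be a nonnegative random variable with mean μ satisfying P(X − μ ≥ t) ≤ exp(−t²/2) for all t ≥ 0. Then for any ξ > 0, E[(X² − (1+ξ)²μ²)₊] ≤ 2(1 + ξ⁻¹) exp(−ξ²μ²/2), where (·)₊ denotes the positive part. -/
/-!
Write `a = (1 + ξ) μ` and `r = √(a² + t)`. The event `X² - a² > t` forces `X - μ ≥ r - μ`,
and `(r - μ)² ≥ ξ²μ² + ξ t / (1 + ξ)`, so the Gaussian tail of `X` gives the positive part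
`(X² - a²)₊` an exponential tail `e^{-ξ²μ²/2} e^{-ξ t / (2(1 + ξ))}`. The layer cake formula
turns this into the bound `e^{-ξ²μ²/2} · 2(1 + ξ)/ξ` on its expectation.
-/

open MeasureTheory Real Set

theorem integral_le_div_of_measure_lt_le_exp {α : Type*} [MeasurableSpace α] {ν : Measure α}
    {g : α → ℝ} (hg : 0 ≤ᵐ[ν] g) (hgm : AEMeasurable g ν) {K c : ℝ} (hK : 0 ≤ K) (hc : 0 < c)
    (htail : ∀ t > 0, ν {x | t < g x} ≤ ENNReal.ofReal (K * exp (-c * t))) :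
    ∫ x, g x ∂ν ≤ K / c := by
  have hexp : IntegrableOn (fun t => K * exp (-c * t)) (Ioi 0) :=
    (integrableOn_exp_mul_Ioi (neg_lt_zero.2 hc) 0).const_mul K
  have hlintegral : ∫⁻ x, ENNReal.ofReal (g x) ∂ν ≤ ENNReal.ofReal (K / c) :=
    calc ∫⁻ x, ENNReal.ofReal (g x) ∂ν = ∫⁻ t in Ioi 0, ν {x | t < g x} :=
          lintegral_eq_lintegral_meas_lt ν hg hgm
      _ ≤ ∫⁻ t in Ioi 0, ENNReal.ofReal (K * exp (-c * t)) :=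
          setLIntegral_mono (by fun_prop) htail
      _ = ENNReal.ofReal (∫ t in Ioi 0, K * exp (-c * t)) :=
          (ofReal_integral_eq_lintegral_ofReal hexp (ae_of_all _ fun t => by positivity)).symm
      _ = ENNReal.ofReal (K / c) := by
          rw [integral_const_mul, integral_exp_mul_Ioi (neg_lt_zero.2 hc), mul_zero, exp_zero,
            neg_div_neg_eq, mul_one_div]
  rw [integral_eq_lintegral_of_nonneg_ae hg hgm.aestronglyMeasurable]
  exact ENNReal.toReal_le_of_le_ofReal (by positivity) hlintegral

theorem sq_mul_sq_add_div_mul_le_sq_sub {μ ξ r : ℝ} (hξ : 0 < 1 + ξ) :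
    ξ ^ 2 * μ ^ 2 + ξ / (1 + ξ) * (r ^ 2 - (1 + ξ) ^ 2 * μ ^ 2) ≤ (r - μ) ^ 2 := by
  have hgap : (r - μ) ^ 2 - (ξ ^ 2 * μ ^ 2 + ξ / (1 + ξ) * (r ^ 2 - (1 + ξ) ^ 2 * μ ^ 2))
      = (r - (1 + ξ) * μ) ^ 2 / (1 + ξ) := by
    field_simp
    ring
  have : 0 ≤ (r - (1 + ξ) * μ) ^ 2 / (1 + ξ) := by positivity
  linarith

theorem measure_lt_max_sq_sub_le {Ω : Type*} [MeasurableSpace Ω] {ℙ : Measure Ω}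
    [IsFiniteMeasure ℙ] {X : Ω → ℝ} {μ : ℝ} (hX : ∀ ω, 0 ≤ X ω)
    (htail : ∀ t : ℝ, 0 ≤ t → (ℙ {ω | X ω - μ ≥ t}).toReal ≤ exp (-t ^ 2 / 2))
    {ξ : ℝ} (hξ : 0 ≤ ξ) {t : ℝ} (ht : 0 < t) :
    ℙ {ω | t < max (X ω ^ 2 - (1 + ξ) ^ 2 * μ ^ 2) 0}
      ≤ ENNReal.ofReal (exp (-ξ ^ 2 * μ ^ 2 / 2) * exp (-(ξ / (2 * (1 + ξ))) * t)) := by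
  set r := √((1 + ξ) ^ 2 * μ ^ 2 + t)
  have hr : r ^ 2 = (1 + ξ) ^ 2 * μ ^ 2 + t := sq_sqrt (by positivity)
  have hμr : μ ≤ r := by
    calc μ ≤ |μ| := le_abs_self μ
      _ = √(μ ^ 2) := (sqrt_sq_eq_abs μ).symm
      _ ≤ r := sqrt_le_sqrt (by nlinarith [sq_nonneg μ, sq_nonneg ξ, mul_nonneg hξ (sq_nonneg μ)])
  have hsub : {ω | t < max (X ω ^ 2 - (1 + ξ) ^ 2 * μ ^ 2) 0} ⊆ {ω | X ω - μ ≥ r - μ} := by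
    intro ω hω
    have hlt : t < X ω ^ 2 - (1 + ξ) ^ 2 * μ ^ 2 := (lt_max_iff.1 hω).resolve_right ht.not_gt
    have : r ≤ X ω := by
      rw [← sqrt_sq (hX ω)]
      exact sqrt_le_sqrt (by linarith)
    show X ω - μ ≥ r - μ
    linarith
  have hgap := sq_mul_sq_add_div_mul_le_sq_sub (μ := μ) (r := r) (by linarith : 0 < 1 + ξ)
  rw [hr, add_sub_cancel_left] at hgap
  have hexp : exp (-(r - μ) ^ 2 / 2)
      ≤ exp (-ξ ^ 2 * μ ^ 2 / 2) * exp (-(ξ / (2 * (1 + ξ))) * t) := by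
    rw [← exp_add, exp_le_exp]
    have : ξ / (2 * (1 + ξ)) * t = ξ / (1 + ξ) * t / 2 := by
      field_simp
    linarith
  calc ℙ {ω | t < max (X ω ^ 2 - (1 + ξ) ^ 2 * μ ^ 2) 0} ≤ ℙ {ω | X ω - μ ≥ r - μ} :=
        measure_mono hsub
    _ = ENNReal.ofReal (ℙ {ω | X ω - μ ≥ r - μ}).toReal :=
        (ENNReal.ofReal_toReal (measure_ne_top _ _)).symm
    _ ≤ _ := ENNReal.ofReal_le_ofReal ((htail _ (sub_nonneg.2 hμr)).trans hexp)

theorem integral_pos_part_le_of_gaussian_tail_general {Ω : Type*} [MeasurableSpace Ω]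
    (ℙ : Measure Ω) [IsProbabilityMeasure ℙ] (X : Ω → ℝ) (μ : ℝ)
    (hX : ∀ ω, 0 ≤ X ω) (hint : Integrable X ℙ)
    (htail : ∀ t : ℝ, 0 ≤ t → (ℙ {ω | X ω - μ ≥ t}).toReal ≤ Real.exp (-t ^ 2 / 2))
    (ξ : ℝ) (hξ : 0 < ξ) :
    ∫ ω, max ((X ω) ^ 2 - (1 + ξ) ^ 2 * μ ^ 2) 0 ∂ℙ
      ≤ 2 * (1 + ξ⁻¹) * Real.exp (-ξ ^ 2 * μ ^ 2 / 2) := by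
  have hm : AEMeasurable (fun ω => max ((X ω) ^ 2 - (1 + ξ) ^ 2 * μ ^ 2) 0) ℙ := by
    have := hint.aemeasurable
    fun_prop
  have hconst : exp (-ξ ^ 2 * μ ^ 2 / 2) / (ξ / (2 * (1 + ξ)))
      = 2 * (1 + ξ⁻¹) * exp (-ξ ^ 2 * μ ^ 2 / 2) := by
    field_simp
    ring
  rw [← hconst]
  exact integral_le_div_of_measure_lt_le_exp (ae_of_all _ fun ω => le_max_right _ _) hm
    (exp_nonneg _) (by positivity) fun t ht => measure_lt_max_sq_sub_le hX htail hξ.le ht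

/-- Lemma 16, second claim: for a nonnegative random variable with mean μ and Gaussian
upper tail, E[(X² − (1+ξ)²μ²)₊] ≤ 2(1+ξ⁻¹)exp(−ξ²μ²/2) for every ξ > 0. -/
theorem integral_pos_part_le_of_gaussian_tail {Ω : Type*} [MeasurableSpace Ω]
    (ℙ : Measure Ω) [IsProbabilityMeasure ℙ] (X : Ω → ℝ) (μ : ℝ)
    (hX : ∀ ω, 0 ≤ X ω) (hint : Integrable X ℙ) (hmean : ∫ ω, X ω ∂ℙ = μ)
    (htail : ∀ t : ℝ, 0 ≤ t → (ℙ {ω | X ω - μ ≥ t}).toReal ≤ Real.exp (-t ^ 2 / 2))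
    (ξ : ℝ) (hξ : 0 < ξ) :
    ∫ ω, max ((X ω) ^ 2 - (1 + ξ) ^ 2 * μ ^ 2) 0 ∂ℙ
      ≤ 2 * (1 + ξ⁻¹) * Real.exp (-ξ ^ 2 * μ ^ 2 / 2) :=
  integral_pos_part_le_of_gaussian_tail_general ℙ X μ hX hint htail ξ hξ
end

section
/- Suppose Y = XA + E and let P be the projection onto the column space of X, so PY = XA + PE. Let k̂ = max{k : d_k(PY) ≥ √μ}. If there exists s with d_s(XA) > (1+δ)√μ and d_{s+1}(XA) < (1−δ)√μ for some δ ∈ (0,1], then the event {k̂ ≠ s} is contained in the event {d₁(PE) ≥ δ√μ}. -/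
open Matrix MeasureTheory

/-- List of singular values of a real matrix, sorted in decreasing order
(square roots of the eigenvalues of `Aᵀ * A`). -/
noncomputable def svList {m n : ℕ} (A : Matrix (Fin m) (Fin n) ℝ) : List ℝ :=
  (((List.ofFn (show (Aᵀ * A).IsHermitian by
      simpa [Matrix.conjTranspose_eq_transpose_of_trivial] using
        Matrix.isHermitian_conjTranspose_mul_self A).eigenvalues).map Real.sqrt).mergeSort
    (fun a b => decide (b ≤ a)))

/-- `sv A k` is the `k`-th largest singular value of `A` (1-indexed); `0` if `k` exceeds
the number of singular values. -/
noncomputable def sv {m n : ℕ} (A : Matrix (Fin m) (Fin n) ℝ) (k : ℕ) : ℝ :=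
  (svList A).getD (k - 1) 0

/-- Nuclear norm: sum of the singular values. -/
noncomputable def nuclearNorm {m n : ℕ} (A : Matrix (Fin m) (Fin n) ℝ) : ℝ :=
  (svList A).sum

/-- Squared Frobenius norm. -/
noncomputable def frobSq {m n : ℕ} (A : Matrix (Fin m) (Fin n) ℝ) : ℝ :=
  ∑ i, ∑ j, (A i j) ^ 2

/-- Frobenius inner product. -/
noncomputable def frobInner {m n : ℕ} (C D : Matrix (Fin m) (Fin n) ℝ) : ℝ :=
  ∑ i, ∑ j, C i j * D i j

/-! If `d₁(PE) < δ√μ`, Weyl's inequality `|dₖ(XA + PE) - dₖ(XA)| ≤ d₁(PE)` keeps `d_s(PY)` at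
least `√μ` and pushes `d_{s+1}(PY)` below `√μ`; as the singular values decrease, `k̂ = s`.

Weyl's inequality `dₖ(A + E) ≤ dₖ(A) + d₁(E)` is the Courant–Fischer argument: the span of the
top `k` right singular vectors of `A + E` and the span of the bottom `n - k + 1` right singular
vectors of `A` meet in some `x ≠ 0`, and then
`dₖ(A + E) ‖x‖ ≤ ‖(A + E) x‖ ≤ ‖A x‖ + ‖E x‖ ≤ (dₖ(A) + d₁(E)) ‖x‖`. -/

theorem List.getD_ofFn {n : ℕ} {α : Type*} (f : Fin n → α) (d : α) (j : ℕ) :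
    (List.ofFn f).getD j d = if h : j < n then f ⟨j, h⟩ else d := by
  rw [List.getD_eq_getElem?_getD, List.getElem?_ofFn]
  split_ifs <;> rfl

theorem Antitone.getD_ofFn {n : ℕ} {α : Type*} [Preorder α] {f : Fin n → α} (hf : Antitone f)
    {d : α} (hd : ∀ i, d ≤ f i) : Antitone fun j => (List.ofFn f).getD j d := by
  intro a b hab
  simp only [List.getD_ofFn]
  split_ifs with hb ha ha
  · exact hf (Fin.mk_le_mk.2 hab)
  · omega
  · exact hd _
  · rfl

theorem List.exists_perm_mergeSort_ofFn_eq {n : ℕ} {α : Type*} [LinearOrder α] (g : Fin n → α) :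
    ∃ σ : Equiv.Perm (Fin n), Antitone (g ∘ σ) ∧
      (List.ofFn g).mergeSort (fun a b => decide (b ≤ a)) = List.ofFn (g ∘ σ) := by
  set σ := Tuple.sort (OrderDual.toDual ∘ g)
  have hσ : Antitone (g ∘ σ) := Tuple.monotone_sort (OrderDual.toDual ∘ g)
  refine ⟨σ, hσ, List.Perm.eq_of_sortedGE List.sortedGE_mergeSort hσ.sortedGE_ofFn ?_⟩
  exact (List.mergeSort_perm _ _).trans (σ.ofFn_comp_perm g).symm

theorem Antitone.sSup_setOf_le_eq {α : Type*} [Preorder α] {f : ℕ → α} (hf : Antitone f)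
    {c : α} {s : ℕ} (hs : 1 ≤ s) (hc : c ≤ f s) (hc' : f (s + 1) < c) :
    sSup {k | 1 ≤ k ∧ c ≤ f k} = s :=
  IsGreatest.csSup_eq ⟨⟨hs, hc⟩, fun k ⟨_, hk⟩ => by
    by_contra! h
    exact (hc'.trans_le (hk.trans (hf h))).false⟩

theorem Module.Basis.finrank_span_image {ι R M : Type*} [DivisionRing R] [AddCommGroup M]
    [Module R M] (b : Module.Basis ι R M) (s : Finset ι) :
    Module.finrank R (Submodule.span R (b '' s)) = s.card := by
  rw [Set.image_eq_range]
  exact (finrank_span_eq_card (b.linearIndependent.comp _ Subtype.val_injective)).trans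
    (Fintype.card_coe s)

theorem Module.Basis.repr_eq_zero_of_mem_span_image {ι R M : Type*} [Semiring R]
    [AddCommMonoid M] [Module R M] (b : Module.Basis ι R M) {s : Set ι} {x : M}
    (hx : x ∈ Submodule.span R (b '' s)) {j : ι} (hj : j ∉ s) : b.repr x j = 0 :=
  Finsupp.notMem_support_iff.1 fun h => hj (b.mem_span_image.1 hx h)

theorem Submodule.exists_mem_ne_zero_of_finrank_lt_add {K V : Type*} [DivisionRing K]
    [AddCommGroup V] [Module K V] [FiniteDimensional K V] {p q : Submodule K V}
    (h : Module.finrank K V < Module.finrank K p + Module.finrank K q) :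
    ∃ x ∈ p, x ∈ q ∧ x ≠ 0 := by
  have := mt Submodule.finrank_add_finrank_le_of_disjoint h.not_ge
  simpa [Submodule.disjoint_def] using this

theorem OrthonormalBasis.sum_repr_sq {ι E : Type*} [Fintype ι] [NormedAddCommGroup E]
    [InnerProductSpace ℝ E] (b : OrthonormalBasis ι ℝ E) (x : E) :
    ∑ i, b.repr x i ^ 2 = ‖x‖ ^ 2 := by
  simp_rw [b.repr_apply_apply, b.sum_sq_inner_right]

namespace Matrix

theorem posSemidef_transpose_mul_self {m n : Type*} [Fintype m] [Fintype n] (A : Matrix m n ℝ) :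
    (Aᵀ * A).PosSemidef := by
  simpa only [conjTranspose_eq_transpose_of_trivial] using posSemidef_conjTranspose_mul_self A

theorem isHermitian_transpose_mul_self {m n : Type*} [Fintype m] [Fintype n] (A : Matrix m n ℝ) :
    (Aᵀ * A).IsHermitian :=
  (posSemidef_transpose_mul_self A).isHermitian

theorem IsHermitian.eigenvectorBasis_repr_toEuclideanLin {𝕜 ι : Type*} [RCLike 𝕜] [Fintype ι]
    [DecidableEq ι] {A : Matrix ι ι 𝕜} (hA : A.IsHermitian) (x : EuclideanSpace 𝕜 ι) (i : ι) :
    hA.eigenvectorBasis.repr (toEuclideanLin A x) i =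
      hA.eigenvalues i * hA.eigenvectorBasis.repr x i := by
  simp only [IsHermitian.eigenvectorBasis, IsHermitian.eigenvalues, IsHermitian.eigenvalues₀,
    OrthonormalBasis.repr_reindex]
  exact LinearMap.IsSymmetric.eigenvectorBasis_apply_self_apply ..

theorem IsHermitian.inner_toEuclideanLin_self {ι : Type*} [Fintype ι] [DecidableEq ι]
    {A : Matrix ι ι ℝ} (hA : A.IsHermitian) (x : EuclideanSpace ℝ ι) :
    inner ℝ x (toEuclideanLin A x) =
      ∑ i, hA.eigenvalues i * hA.eigenvectorBasis.repr x i ^ 2 := by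
  rw [← hA.eigenvectorBasis.repr.inner_map_map, PiLp.inner_apply]
  refine Finset.sum_congr rfl fun i _ => ?_
  rw [hA.eigenvectorBasis_repr_toEuclideanLin, RCLike.inner_apply, conj_trivial,
    RCLike.ofReal_real_eq_id, id]
  ring

theorem norm_toEuclideanLin_sq {ι κ : Type*} [Fintype ι] [DecidableEq ι] [Fintype κ]
    [DecidableEq κ] (A : Matrix κ ι ℝ) (x : EuclideanSpace ℝ ι) :
    ‖toEuclideanLin A x‖ ^ 2 = inner ℝ x (toEuclideanLin (Aᵀ * A) x) := by
  rw [← real_inner_self_eq_norm_sq, ← conjTranspose_eq_transpose_of_trivial, toEuclideanLin,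
    toLpLin_mul _ 2, ← toEuclideanLin, ← toEuclideanLin,
    toEuclideanLin_conjTranspose_eq_adjoint, LinearMap.comp_apply, LinearMap.adjoint_inner_right]

end Matrix

section SingularValues

variable {m n : ℕ}

theorem exists_perm_svList_eq_ofFn (A : Matrix (Fin m) (Fin n) ℝ) :
    ∃ σ : Equiv.Perm (Fin n),
      Antitone (fun j => √((isHermitian_transpose_mul_self A).eigenvalues (σ j))) ∧
      svList A = List.ofFn fun j => √((isHermitian_transpose_mul_self A).eigenvalues (σ j)) := by
  rw [svList, List.map_ofFn]
  obtain ⟨σ, hanti, hsort⟩ := List.exists_perm_mergeSort_ofFn_eq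
    (Real.sqrt ∘ (isHermitian_transpose_mul_self A).eigenvalues)
  exact ⟨σ, hanti, hsort⟩

theorem sv_nonneg (A : Matrix (Fin m) (Fin n) ℝ) (k : ℕ) : 0 ≤ sv A k := by
  obtain ⟨σ, -, hσ⟩ := exists_perm_svList_eq_ofFn A
  rw [sv, hσ, List.getD_ofFn]
  split_ifs
  exacts [Real.sqrt_nonneg _, le_rfl]

-- `sv A 0 = sv A 1` by truncated subtraction, so this holds on all of `ℕ`.
theorem sv_antitone (A : Matrix (Fin m) (Fin n) ℝ) : Antitone (sv A) := by
  obtain ⟨σ, hanti, hσ⟩ := exists_perm_svList_eq_ofFn A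
  show Antitone fun k => (svList A).getD (k - 1) 0
  rw [hσ]
  exact (hanti.getD_ofFn fun _ => Real.sqrt_nonneg _).comp_monotone
    fun a b (h : a ≤ b) => Nat.sub_le_sub_right h 1

theorem sv_eq_zero_of_lt (A : Matrix (Fin m) (Fin n) ℝ) {k : ℕ} (hk : n < k) : sv A k = 0 := by
  obtain ⟨σ, -, hσ⟩ := exists_perm_svList_eq_ofFn A
  rw [sv, hσ, List.getD_ofFn, dif_neg (by omega)]

theorem sv_neg (A : Matrix (Fin m) (Fin n) ℝ) : sv (-A) = sv A := by
  have h : (-A)ᵀ * -A = Aᵀ * A := by simp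
  unfold sv svList
  congr! 8

theorem exists_orthonormalBasis_norm_toEuclideanLin_sq (A : Matrix (Fin m) (Fin n) ℝ) :
    ∃ v : OrthonormalBasis (Fin n) ℝ (EuclideanSpace ℝ (Fin n)), ∀ x,
      ‖toEuclideanLin A x‖ ^ 2 = ∑ j : Fin n, sv A (j + 1) ^ 2 * v.repr x j ^ 2 := by
  obtain ⟨σ, -, hσ⟩ := exists_perm_svList_eq_ofFn A
  set hA := isHermitian_transpose_mul_self A
  refine ⟨hA.eigenvectorBasis.reindex σ.symm, fun x => ?_⟩
  rw [norm_toEuclideanLin_sq, hA.inner_toEuclideanLin_self, ← Equiv.sum_comp σ]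
  refine Finset.sum_congr rfl fun j _ => ?_
  rw [sv, hσ, Nat.add_sub_cancel, List.getD_ofFn, dif_pos j.2,
    Real.sq_sqrt ((posSemidef_transpose_mul_self A).eigenvalues_nonneg _),
    OrthonormalBasis.repr_reindex, Equiv.symm_symm]

theorem sv_mul_norm_le_norm_toEuclideanLin {A : Matrix (Fin m) (Fin n) ℝ}
    {v : OrthonormalBasis (Fin n) ℝ (EuclideanSpace ℝ (Fin n))}
    (hv : ∀ x, ‖toEuclideanLin A x‖ ^ 2 = ∑ j : Fin n, sv A (j + 1) ^ 2 * v.repr x j ^ 2)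
    {k : ℕ} {x : EuclideanSpace ℝ (Fin n)} (hx : ∀ j : Fin n, k ≤ j.val → v.repr x j = 0) :
    sv A k * ‖x‖ ≤ ‖toEuclideanLin A x‖ := by
  have hsq : (sv A k * ‖x‖) ^ 2 ≤ ‖toEuclideanLin A x‖ ^ 2 := by
    rw [hv, mul_pow, ← v.sum_repr_sq, Finset.mul_sum]
    refine Finset.sum_le_sum fun j _ => ?_
    by_cases hj : k ≤ j.val
    · simp [hx j hj]
    · gcongr
      · exact sv_nonneg A k
      · exact sv_antitone A (by omega)
  exact (pow_le_pow_iff_left₀ (mul_nonneg (sv_nonneg A k) (norm_nonneg x)) (norm_nonneg _)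
    two_ne_zero).1 hsq

theorem norm_toEuclideanLin_le_sv_mul_norm {A : Matrix (Fin m) (Fin n) ℝ}
    {v : OrthonormalBasis (Fin n) ℝ (EuclideanSpace ℝ (Fin n))}
    (hv : ∀ x, ‖toEuclideanLin A x‖ ^ 2 = ∑ j : Fin n, sv A (j + 1) ^ 2 * v.repr x j ^ 2)
    {k : ℕ} {x : EuclideanSpace ℝ (Fin n)} (hx : ∀ j : Fin n, j.val + 1 < k → v.repr x j = 0) :
    ‖toEuclideanLin A x‖ ≤ sv A k * ‖x‖ := by
  have hsq : ‖toEuclideanLin A x‖ ^ 2 ≤ (sv A k * ‖x‖) ^ 2 := by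
    rw [hv, mul_pow, ← v.sum_repr_sq, Finset.mul_sum]
    refine Finset.sum_le_sum fun j _ => ?_
    by_cases hj : j.val + 1 < k
    · simp [hx j hj]
    · gcongr
      · exact sv_nonneg A _
      · exact sv_antitone A (by omega)
  exact (pow_le_pow_iff_left₀ (norm_nonneg _) (mul_nonneg (sv_nonneg A k) (norm_nonneg x))
    two_ne_zero).1 hsq

theorem sv_add_le (A E : Matrix (Fin m) (Fin n) ℝ) {k : ℕ} (hk : 1 ≤ k) :
    sv (A + E) k ≤ sv A k + sv E 1 := by
  rcases lt_or_ge n k with hnk | hkn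
  · rw [sv_eq_zero_of_lt _ hnk]
    exact add_nonneg (sv_nonneg A k) (sv_nonneg E 1)
  obtain ⟨v, hv⟩ := exists_orthonormalBasis_norm_toEuclideanLin_sq (A + E)
  obtain ⟨w, hw⟩ := exists_orthonormalBasis_norm_toEuclideanLin_sq A
  obtain ⟨u, hu⟩ := exists_orthonormalBasis_norm_toEuclideanLin_sq E
  set i : Fin n := ⟨k - 1, by omega⟩
  obtain ⟨x, hxv, hxw, hx0⟩ := Submodule.exists_mem_ne_zero_of_finrank_lt_add
    (p := Submodule.span ℝ (v.toBasis '' ↑(Finset.Iic i)))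
    (q := Submodule.span ℝ (w.toBasis '' ↑(Finset.Ici i))) (by
      rw [Module.Basis.finrank_span_image, Module.Basis.finrank_span_image, Fin.card_Iic,
        Fin.card_Ici, finrank_euclideanSpace_fin]
      omega)
  have hbound : sv (A + E) k * ‖x‖ ≤ (sv A k + sv E 1) * ‖x‖ :=
    calc sv (A + E) k * ‖x‖ ≤ ‖toEuclideanLin (A + E) x‖ :=
          sv_mul_norm_le_norm_toEuclideanLin hv fun j hj => by
            simpa using v.toBasis.repr_eq_zero_of_mem_span_image hxv (j := j)
              (by simp [i, Fin.le_def]; omega)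
      _ ≤ ‖toEuclideanLin A x‖ + ‖toEuclideanLin E x‖ := by
          rw [map_add, LinearMap.add_apply]
          exact norm_add_le _ _
      _ ≤ sv A k * ‖x‖ + sv E 1 * ‖x‖ := by
          gcongr
          · exact norm_toEuclideanLin_le_sv_mul_norm hw fun j hj => by
              simpa using w.toBasis.repr_eq_zero_of_mem_span_image hxw (j := j)
                (by simp [i, Fin.le_def]; omega)
          · exact norm_toEuclideanLin_le_sv_mul_norm hu fun j hj => by omega
      _ = (sv A k + sv E 1) * ‖x‖ := by ring
  exact le_of_mul_le_mul_right hbound (norm_pos_iff.2 hx0)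

end SingularValues

theorem rank_consistency_event_general {m n : ℕ}
    (XA PE : Matrix (Fin m) (Fin n) ℝ)
    (μ δ : ℝ)
    (s : ℕ) (hs1 : 1 ≤ s)
    (hlow : (1 + δ) * Real.sqrt μ < sv XA s)
    (hhigh : sv XA (s + 1) < (1 - δ) * Real.sqrt μ)
    (hne : sSup {k : ℕ | 1 ≤ k ∧ Real.sqrt μ ≤ sv (XA + PE) k} ≠ s) :
    δ * Real.sqrt μ ≤ sv PE 1 := by
  by_contra! hsmall
  have hweyl_s : sv XA s ≤ sv (XA + PE) s + sv PE 1 := by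
    simpa [sv_neg] using sv_add_le (XA + PE) (-PE) hs1
  have hweyl_succ := sv_add_le XA PE (k := s + 1) (by omega)
  exact hne <| (sv_antitone (XA + PE)).sSup_setOf_le_eq hs1 (by linarith) (by linarith)

/-- Theorem 2 (deterministic form): if d_s(XA) > (1+δ)√μ and d_{s+1}(XA) < (1−δ)√μ, then
k̂ ≠ s (where k̂ counts the singular values of PY = XA + PE at least √μ) implies
d₁(PE) ≥ δ√μ. -/
theorem rank_consistency_event {m n : ℕ}
    (XA PE : Matrix (Fin m) (Fin n) ℝ)
    (μ δ : ℝ) (hμ : 0 < μ) (hδ0 : 0 < δ) (hδ1 : δ ≤ 1)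
    (s : ℕ) (hs1 : 1 ≤ s)
    (hlow : (1 + δ) * Real.sqrt μ < sv XA s)
    (hhigh : sv XA (s + 1) < (1 - δ) * Real.sqrt μ)
    (hne : sSup {k : ℕ | 1 ≤ k ∧ Real.sqrt μ ≤ sv (XA + PE) k} ≠ s) :
    δ * Real.sqrt μ ≤ sv PE 1 :=
  rank_consistency_event_general XA PE μ δ s hs1 hlow hhigh hne
end
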